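/- arXiv:0910.3369 — 2 statements merged into one kernel-verified Lean document; each statement's English description precedes it below -/
import Mathlib

section
/- Let (x_i, f_i) be an unconditional and locally shrinking Schauder frame of a Banach space X. If the frame is not pre-boundedly complete, then X contains a subspace isomorphic to c_0; that is, there exists a continuous linear map T : c_0 → X and constants 0 < a ≤ b such that a‖z‖ ≤ ‖T z‖ ≤ b‖z‖ for all z ∈ c_0. -/
open Filter Topology ZeroAtInfty

noncomputable def tailSupX {X : Type*} [NormedAddCommGroup X] [NormedSpace ℝ X]
    (x : ℕ → X) (g : X →L[ℝ] ℝ) (n : ℕ) : ℝ :=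
  sSup ((fun z : X => |g z|) ''
    {z | z ∈ Submodule.span ℝ (x '' {i | n ≤ i}) ∧ ‖z‖ ≤ 1})

/-!
Choose `F` in the bidual for which `∑ F (f i) • x i` diverges. Its partial sums are not Cauchy,
so there are blocks `v k = ∑_{p k ≤ i < q k} F (f i) • x i` with `ε ≤ ‖v k‖` arbitrarily far out.
By unconditionality and Banach–Steinhaus the operators `∑_{i ∈ B} f i ⊗ x i` are uniformly
bounded, so every multiplier sum `∑ a k • v k` with `|a k| ≤ 1` over disjoint blocks is bounded,
which makes `z ↦ ∑ z k • v k` a bounded map `c₀ → X`.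

For the lower bound the blocks are chosen by a gliding hump along cuts
`cut 0 ≤ cut 1 ≤ ⋯`: block `k` starts so late that, by local shrinking, its first `cut k`
frame coefficients are negligible, and the next cut comes after its frame expansion has
converged up to a small error. Then `ψ k = φ k ∘ ∑_{cut k ≤ i < cut (k+1)} f i ⊗ x i`, with `φ k`
norming `v k`, is almost biorthogonal to `(v k)`, and `|z k| ≲ ψ k (∑ z j • v j)`.
-/

theorem Summable.exists_forall_norm_sum_le {E : Type*} [NormedAddCommGroup E] {y : ℕ → E}
    (hy : Summable y) : ∃ K, ∀ B : Finset ℕ, ‖∑ i ∈ B, y i‖ ≤ K := by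
  obtain ⟨s, hs⟩ := cauchySeq_finset_iff_vanishing_norm.mp hy.hasSum.cauchySeq 1 one_pos
  refine ⟨∑ i ∈ s, ‖y i‖ + 1, fun B => ?_⟩
  rw [← Finset.sum_inter_add_sum_sdiff B s]
  refine (norm_add_le _ _).trans (add_le_add ?_ (hs _ Finset.sdiff_disjoint).le)
  exact (norm_sum_le _ _).trans
    (Finset.sum_le_sum_of_subset_of_nonneg Finset.inter_subset_right fun _ _ _ => norm_nonneg _)

theorem exists_le_norm_sum_Ico_of_not_cauchySeq {E : Type*} [NormedAddCommGroup E]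
    {y : ℕ → E} (h : ¬ CauchySeq fun n => ∑ i ∈ Finset.range n, y i) :
    ∃ ε > 0, ∀ N, ∃ p q, N ≤ p ∧ p < q ∧ ε ≤ ‖∑ i ∈ Finset.Ico p q, y i‖ := by
  simp only [Metric.cauchySeq_iff', not_forall, not_exists, not_lt] at h
  obtain ⟨ε, hε, hN⟩ := h
  refine ⟨ε, hε, fun N => ?_⟩
  obtain ⟨n, hn, hdist⟩ := hN N
  have hNn : N < n := hn.lt_of_ne fun hNn => by simp [hNn] at hdist; linarith
  refine ⟨N, n, le_rfl, hNn, ?_⟩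
  rwa [Finset.sum_Ico_eq_sub _ hNn.le, ← dist_eq_norm]

section MultiplierSums

variable {E : Type*} [NormedAddCommGroup E] [NormedSpace ℝ E] {y : ℕ → E} {K M : ℝ}

def MultiplierSumsLE (y : ℕ → E) (M : ℝ) : Prop :=
  ∀ (s : Finset ℕ) (c : ℕ → ℝ), (∀ i ∈ s, |c i| ≤ 1) → ‖∑ i ∈ s, c i • y i‖ ≤ M

theorem norm_add_sum_smul_le_of_mem_Icc (A : Finset ℕ) (u : E)
    (hK : ∀ B ⊆ A, ‖u + ∑ i ∈ B, y i‖ ≤ K) (c : ℕ → ℝ)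
    (hc : ∀ i ∈ A, c i ∈ Set.Icc (0 : ℝ) 1) : ‖u + ∑ i ∈ A, c i • y i‖ ≤ K := by
  induction A using Finset.induction_on generalizing u with
  | empty => simpa using hK ∅ le_rfl
  | @insert a A ha ih =>
    have hcA : ∀ i ∈ A, c i ∈ Set.Icc (0 : ℝ) 1 := fun i hi =>
      hc i (Finset.mem_insert_of_mem hi)
    obtain ⟨hca₀, hca₁⟩ := hc a (Finset.mem_insert_self a A)
    set w := u + ∑ i ∈ A, c i • y i
    have hw : ‖w‖ ≤ K :=
      ih u (fun B hB => hK B (hB.trans (Finset.subset_insert a A))) hcA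
    have hwy : ‖w + y a‖ ≤ K := by
      have := ih (u + y a) (fun B hB => ?_) hcA
      · rwa [add_right_comm] at this
      have h := hK (insert a B) (Finset.insert_subset_insert a hB)
      rwa [Finset.sum_insert (fun h => ha (hB h)), ← add_assoc] at h
    have hseg : w + c a • y a ∈ segment ℝ w (w + y a) :=
      ⟨1 - c a, c a, by linarith, hca₀, by ring, by module⟩
    calc ‖u + ∑ i ∈ insert a A, c i • y i‖ = ‖w + c a • y a‖ := by
          rw [Finset.sum_insert ha, add_left_comm, add_comm]
      _ ≤ max ‖w‖ ‖w + y a‖ :=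
          convexOn_univ_norm.le_on_segment (Set.mem_univ _) (Set.mem_univ _) hseg
      _ ≤ K := max_le hw hwy

theorem MultiplierSumsLE.of_forall_norm_sum_le (hK : ∀ B : Finset ℕ, ‖∑ i ∈ B, y i‖ ≤ K) :
    MultiplierSumsLE y (2 * K) := by
  intro A c hc
  have hK₀ : ∀ B ⊆ A, ‖(0 : E) + ∑ i ∈ B, y i‖ ≤ K := fun B _ => by simpa using hK B
  have hpos := norm_add_sum_smul_le_of_mem_Icc A 0 hK₀ (fun i => max (c i) 0) fun i hi =>
    ⟨le_max_right _ _, max_le (abs_le.mp (hc i hi)).2 zero_le_one⟩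
  have hneg := norm_add_sum_smul_le_of_mem_Icc A 0 hK₀ (fun i => max (-c i) 0) fun i hi =>
    ⟨le_max_right _ _, max_le (by linarith [(abs_le.mp (hc i hi)).1]) zero_le_one⟩
  rw [zero_add] at hpos hneg
  have hsplit : ∑ i ∈ A, c i • y i
      = ∑ i ∈ A, max (c i) 0 • y i - ∑ i ∈ A, max (-c i) 0 • y i := by
    rw [← Finset.sum_sub_distrib]
    refine Finset.sum_congr rfl fun i _ => ?_
    rw [← sub_smul, max_zero_sub_max_neg_zero_eq_self]
  rw [hsplit, two_mul]
  exact (norm_sub_le _ _).trans (add_le_add hpos hneg)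

theorem MultiplierSumsLE.norm_sum_smul_le (hy : MultiplierSumsLE y M)
    (s : Finset ℕ) (c : ℕ → ℝ) {r : ℝ} (hr : 0 ≤ r) (hc : ∀ i ∈ s, |c i| ≤ r) :
    ‖∑ i ∈ s, c i • y i‖ ≤ M * r := by
  rcases hr.eq_or_lt with rfl | hr
  · have hzero : ∀ i ∈ s, c i • y i = 0 := fun i hi => by
      rw [abs_nonpos_iff.mp (hc i hi), zero_smul]
    rw [Finset.sum_eq_zero hzero, norm_zero, mul_zero]
  have hscale : ∑ i ∈ s, c i • y i = r • ∑ i ∈ s, (c i / r) • y i := by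
    rw [Finset.smul_sum]
    exact Finset.sum_congr rfl fun i _ => by rw [smul_smul, mul_div_cancel₀ _ hr.ne']
  rw [hscale, norm_smul, Real.norm_of_nonneg hr.le, mul_comm]
  gcongr
  refine hy s _ fun i hi => ?_
  rw [abs_div, abs_of_pos hr, div_le_one hr]
  exact hc i hi

theorem MultiplierSumsLE.blocks (hy : MultiplierSumsLE y M)
    {I : ℕ → Finset ℕ} (hI : Pairwise fun j k => Disjoint (I j) (I k)) :
    MultiplierSumsLE (fun k => ∑ i ∈ I k, y i) M := by
  classical
  intro s a ha
  let blk : ℕ → ℕ := fun i => if h : ∃ k, i ∈ I k then h.choose else 0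
  have hblk : ∀ k, ∀ i ∈ I k, blk i = k := fun k i hi => by
    have h : ∃ k, i ∈ I k := ⟨k, hi⟩
    simp only [blk, dif_pos h]
    by_contra hne
    exact Finset.disjoint_left.mp (hI hne) h.choose_spec hi
  have hsum : ∑ k ∈ s, a k • ∑ i ∈ I k, y i = ∑ i ∈ s.biUnion I, a (blk i) • y i := by
    rw [Finset.sum_biUnion (hI.set_pairwise _)]
    refine Finset.sum_congr rfl fun k _ => ?_
    rw [Finset.smul_sum]
    exact Finset.sum_congr rfl fun i hi => by rw [hblk k i hi]
  rw [hsum]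
  refine hy _ _ fun i hi => ?_
  obtain ⟨k, hk, hik⟩ := Finset.mem_biUnion.mp hi
  rw [hblk k i hik]
  exact ha k hk

theorem MultiplierSumsLE.nonneg (hy : MultiplierSumsLE y M) : 0 ≤ M := by
  simpa using hy ∅ 0

theorem MultiplierSumsLE.norm_sum_le (hy : MultiplierSumsLE y M)
    (s : Finset ℕ) : ‖∑ i ∈ s, y i‖ ≤ M := by
  simpa using hy s 1 fun _ _ => by simp

end MultiplierSums

namespace ZeroAtInftyContinuousMap

variable {α β : Type*} [TopologicalSpace α] [NormedAddCommGroup β]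

theorem norm_apply_le_norm (z : C₀(α, β)) (a : α) : ‖z a‖ ≤ ‖z‖ :=
  z.toBCF.norm_coe_le_norm a

theorem norm_le_iff (z : C₀(α, β)) {r : ℝ} (hr : 0 ≤ r) : ‖z‖ ≤ r ↔ ∀ a, ‖z a‖ ≤ r :=
  z.toBCF.norm_le hr

theorem tendsto_atTop (z : C₀(ℕ, β)) : Tendsto z atTop (𝓝 0) := by
  simpa [cocompact_eq_cofinite, Nat.cofinite_eq_atTop] using z.zero_at_infty'

end ZeroAtInftyContinuousMap

section CZero

variable {X : Type*} [NormedAddCommGroup X] [NormedSpace ℝ X] {v : ℕ → X} {M : ℝ}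
  {ψ : ℕ → X →L[ℝ] ℝ} {C α β : ℝ} {η : ℕ → ℝ}

theorem MultiplierSumsLE.summable_smul [CompleteSpace X] (hv : MultiplierSumsLE v M)
    (z : C₀(ℕ, ℝ)) : Summable fun k => z k • v k := by
  refine summable_iff_vanishing_norm.mpr fun e he => ?_
  have hM := hv.nonneg
  have hη : 0 < e / (M + 1) := by positivity
  obtain ⟨m, hm⟩ := Metric.tendsto_atTop.mp z.tendsto_atTop _ hη
  refine ⟨Finset.range m, fun t ht => ?_⟩
  have hsmall : ∀ k ∈ t, |z k| ≤ e / (M + 1) := fun k hk => by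
    have hkm : m ≤ k := by simpa using Finset.disjoint_left.mp ht hk
    simpa using (hm k hkm).le
  calc ‖∑ k ∈ t, z k • v k‖ ≤ M * (e / (M + 1)) := hv.norm_sum_smul_le t _ hη.le hsmall
    _ < e := by rw [mul_div_assoc', div_lt_iff₀ (by positivity)]; nlinarith

theorem MultiplierSumsLE.exists_c0_map [CompleteSpace X] (hv : MultiplierSumsLE v M) :
    ∃ T : C₀(ℕ, ℝ) →L[ℝ] X, ∀ z, HasSum (fun k => z k • v k) (T z) ∧ ‖T z‖ ≤ M * ‖z‖ := by
  let T : C₀(ℕ, ℝ) →ₗ[ℝ] X :=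
    { toFun := fun z => ∑' k, z k • v k
      map_add' := fun z w => by
        simp only [ZeroAtInftyContinuousMap.add_apply, add_smul]
        exact (hv.summable_smul z).tsum_add (hv.summable_smul w)
      map_smul' := fun r z => by
        simp only [ZeroAtInftyContinuousMap.smul_apply, smul_eq_mul, ← smul_smul]
        exact (hv.summable_smul z).tsum_const_smul r }
  have hbound : ∀ z, ‖T z‖ ≤ M * ‖z‖ := fun z =>
    le_of_tendsto (hv.summable_smul z).hasSum.norm <| Eventually.of_forall fun s =>
      hv.norm_sum_smul_le s z (norm_nonneg z) fun k _ => by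
        simpa using z.norm_apply_le_norm k
  exact ⟨T.mkContinuous M hbound, fun z => ⟨(hv.summable_smul z).hasSum, hbound z⟩⟩

theorem abs_mul_le_of_almost_biorthogonal (hψ : ∀ k, ‖ψ k‖ ≤ C) (hα : 0 < α)
    (hdiag : ∀ k, α ≤ ψ k (v k)) (hoff : ∀ j k, j ≠ k → |ψ k (v j)| ≤ η j)
    (hηβ : ∀ n, ∑ j ∈ Finset.range n, η j ≤ β)
    {a : ℕ → ℝ} {r : ℝ} (ha : ∀ j, |a j| ≤ r) {k n : ℕ} (hkn : k < n) :
    |a k| * α ≤ C * ‖∑ j ∈ Finset.range n, a j • v j‖ + β * r := by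
  have hη₀ : ∀ j, 0 ≤ η j := fun j => (abs_nonneg _).trans (hoff j (j + 1) j.succ_ne_self.symm)
  have hsplit : ψ k (∑ j ∈ Finset.range n, a j • v j)
      = a k * ψ k (v k) + ∑ j ∈ (Finset.range n).erase k, a j * ψ k (v j) := by
    simp only [map_sum, map_smul, smul_eq_mul]
    exact (Finset.add_sum_erase _ _ (Finset.mem_range.mpr hkn)).symm
  have hrest : |∑ j ∈ (Finset.range n).erase k, a j * ψ k (v j)| ≤ β * r :=
    calc _ ≤ ∑ j ∈ (Finset.range n).erase k, r * η j := by
          refine (Finset.abs_sum_le_sum_abs _ _).trans (Finset.sum_le_sum fun j hj => ?_)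
          rw [abs_mul]
          exact mul_le_mul (ha j) (hoff j k (Finset.ne_of_mem_erase hj)) (abs_nonneg _)
            ((abs_nonneg _).trans (ha j))
      _ ≤ r * ∑ j ∈ Finset.range n, η j := by
          rw [← Finset.mul_sum]
          gcongr
          exacts [(abs_nonneg _).trans (ha 0), fun j _ _ => hη₀ j, Finset.erase_subset k _]
      _ ≤ β * r := by
          rw [mul_comm]; gcongr; exacts [(abs_nonneg _).trans (ha 0), hηβ n]
  calc |a k| * α ≤ |a k * ψ k (v k)| := by
        rw [abs_mul, abs_of_pos (hα.trans_le (hdiag k))]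
        exact mul_le_mul_of_nonneg_left (hdiag k) (abs_nonneg _)
    _ ≤ |ψ k (∑ j ∈ Finset.range n, a j • v j)|
          + |∑ j ∈ (Finset.range n).erase k, a j * ψ k (v j)| := by
        rw [eq_sub_of_add_eq hsplit.symm]; exact abs_sub _ _
    _ ≤ _ := add_le_add (((ψ k).le_opNorm _).trans (by gcongr; exact hψ k)) hrest

theorem norm_le_of_hasSum_of_almost_biorthogonal (hψ : ∀ k, ‖ψ k‖ ≤ C) (hα : 0 < α)
    (hdiag : ∀ k, α ≤ ψ k (v k)) (hoff : ∀ j k, j ≠ k → |ψ k (v j)| ≤ η j)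
    (hηβ : ∀ n, ∑ j ∈ Finset.range n, η j ≤ β)
    {z : C₀(ℕ, ℝ)} {w : X} (hz : HasSum (fun k => z k • v k) w) :
    α * ‖z‖ ≤ C * ‖w‖ + β * ‖z‖ := by
  have hcoord : ∀ k, |z k| * α ≤ C * ‖w‖ + β * ‖z‖ := fun k =>
    ge_of_tendsto ((hz.tendsto_sum_nat.norm.const_mul C).add_const _) <|
      (eventually_gt_atTop k).mono fun n hkn =>
        abs_mul_le_of_almost_biorthogonal hψ hα hdiag hoff hηβ
          (fun j => by simpa using z.norm_apply_le_norm j) hkn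
  have hC : 0 ≤ C := (norm_nonneg _).trans (hψ 0)
  have hβ : 0 ≤ β := by simpa using hηβ 0
  have hr : 0 ≤ (C * ‖w‖ + β * ‖z‖) / α := by positivity
  have := (z.norm_le_iff hr).mpr fun k => by
    rw [Real.norm_eq_abs, le_div_iff₀ hα]; exact hcoord k
  rwa [le_div_iff₀ hα, mul_comm] at this

theorem exists_c0_embedding [CompleteSpace X] (hv : MultiplierSumsLE v M)
    (hψ : ∀ k, ‖ψ k‖ ≤ C) (hβα : β < α) (hdiag : ∀ k, α ≤ ψ k (v k))
    (hoff : ∀ j k, j ≠ k → |ψ k (v j)| ≤ η j)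
    (hηβ : ∀ n, ∑ j ∈ Finset.range n, η j ≤ β) :
    ∃ (T : C₀(ℕ, ℝ) →L[ℝ] X) (a b : ℝ), 0 < a ∧ a ≤ b ∧
      ∀ z : C₀(ℕ, ℝ), a * ‖z‖ ≤ ‖T z‖ ∧ ‖T z‖ ≤ b * ‖z‖ := by
  have hα : 0 < α := (show 0 ≤ β by simpa using hηβ 0).trans_lt hβα
  have hC : 0 < C := by
    by_contra! hC
    have h := ((le_abs_self _).trans ((ψ 0).le_opNorm (v 0))).trans
      (mul_le_mul_of_nonneg_right (hψ 0) (norm_nonneg (v 0)))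
    nlinarith [hdiag 0, norm_nonneg (v 0)]
  obtain ⟨T, hT⟩ := hv.exists_c0_map
  refine ⟨T, (α - β) / C, max M ((α - β) / C), div_pos (sub_pos.mpr hβα) hC, le_max_right _ _,
    fun z => ⟨?_, (hT z).2.trans (by gcongr; exact le_max_left _ _)⟩⟩
  have := norm_le_of_hasSum_of_almost_biorthogonal hψ hα hdiag hoff hηβ (hT z).1
  rw [div_mul_eq_mul_div, div_le_iff₀ hC]
  linarith

end CZero

section Frame

variable {X : Type*} [NormedAddCommGroup X] [NormedSpace ℝ X]

theorem exists_forall_norm_sum_smulRight_le [CompleteSpace X] {x : ℕ → X}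
    {f : ℕ → X →L[ℝ] ℝ} (hsum : ∀ v, Summable fun i => f i v • x i) :
    ∃ K, ∀ B : Finset ℕ, ‖∑ i ∈ B, (f i).smulRight (x i)‖ ≤ K :=
  banach_steinhaus fun v => by
    simpa using (hsum v).exists_forall_norm_sum_le

theorem norm_sum_bidual_smul_le (x : ℕ → X) (f : ℕ → X →L[ℝ] ℝ) (F : (X →L[ℝ] ℝ) →L[ℝ] ℝ)
    (B : Finset ℕ) :
    ‖∑ i ∈ B, F (f i) • x i‖ ≤ ‖F‖ * ‖∑ i ∈ B, (f i).smulRight (x i)‖ := by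
  refine NormedSpace.norm_le_dual_bound ℝ _ (by positivity) fun g => ?_
  have hg : g (∑ i ∈ B, F (f i) • x i) = F (g.comp (∑ i ∈ B, (f i).smulRight (x i))) := by
    have hcomp : ∀ i, g.comp ((f i).smulRight (x i)) = g (x i) • f i := fun i => by
      ext; simp [mul_comm]
    simp [ContinuousLinearMap.comp_finsetSum, hcomp, mul_comm]
  rw [hg]
  calc ‖F _‖ ≤ ‖F‖ * ‖g.comp (∑ i ∈ B, (f i).smulRight (x i))‖ := F.le_opNorm _
    _ ≤ ‖F‖ * (‖g‖ * ‖∑ i ∈ B, (f i).smulRight (x i)‖) := by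
        gcongr; exact g.opNorm_comp_le _
    _ = _ := by ring

theorem bddAbove_tailSupX (x : ℕ → X) (g : X →L[ℝ] ℝ) (n : ℕ) :
    BddAbove ((fun z : X => |g z|) ''
      {z | z ∈ Submodule.span ℝ (x '' {i | n ≤ i}) ∧ ‖z‖ ≤ 1}) :=
  ⟨‖g‖, by rintro _ ⟨z, ⟨-, hz⟩, rfl⟩; simpa using g.le_opNorm_of_le hz⟩

theorem tailSupX_nonneg (x : ℕ → X) (g : X →L[ℝ] ℝ) (n : ℕ) : 0 ≤ tailSupX x g n :=
  le_csSup_of_le (bddAbove_tailSupX x g n) ⟨0, ⟨zero_mem _, by simp⟩, rfl⟩ (abs_nonneg _)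

theorem abs_apply_le_tailSupX_mul_norm (x : ℕ → X) (g : X →L[ℝ] ℝ) (n : ℕ) {z : X}
    (hz : z ∈ Submodule.span ℝ (x '' {i | n ≤ i})) : |g z| ≤ tailSupX x g n * ‖z‖ := by
  rcases eq_or_ne z 0 with rfl | hz0
  · simp
  have hnz : 0 < ‖z‖ := norm_pos_iff.mpr hz0
  have hunit : |g (‖z‖⁻¹ • z)| ≤ tailSupX x g n :=
    le_csSup (bddAbove_tailSupX x g n)
      ⟨_, ⟨Submodule.smul_mem _ _ hz, (norm_smul_inv_norm hz0).le⟩, rfl⟩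
  rw [map_smul, smul_eq_mul, abs_mul, abs_inv, abs_norm, inv_mul_le_iff₀ hnz] at hunit
  linarith

theorem eventually_sum_norm_smul_le {x : ℕ → X} {f : ℕ → X →L[ℝ] ℝ}
    (hshr : ∀ m, Tendsto (tailSupX x (f m)) atTop (𝓝 0)) (n : ℕ) (R : ℝ) {δ : ℝ}
    (hδ : 0 < δ) :
    ∀ᶠ p in atTop, ∀ w ∈ Submodule.span ℝ (x '' {i | p ≤ i}), ‖w‖ ≤ R →
      ∑ i ∈ Finset.range n, ‖f i w • x i‖ ≤ δ := by
  have hlim : Tendsto (fun p => ∑ i ∈ Finset.range n, tailSupX x (f i) p * R * ‖x i‖) atTop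
      (𝓝 0) := by
    simpa using tendsto_finsetSum _ fun i _ => ((hshr i).mul_const R).mul_const ‖x i‖
  filter_upwards [hlim.eventually_le_const hδ] with p hp w hw hwR
  refine le_trans (Finset.sum_le_sum fun i _ => ?_) hp
  rw [norm_smul, Real.norm_eq_abs]
  gcongr
  exact (abs_apply_le_tailSupX_mul_norm x (f i) p hw).trans
    (mul_le_mul_of_nonneg_left hwR (tailSupX_nonneg x (f i) p))

end Frame

section GlidingHump

variable {X : Type*} [NormedAddCommGroup X] [NormedSpace ℝ X] {x : ℕ → X}
  {f : ℕ → X →L[ℝ] ℝ} {b : ℕ → ℝ} {ε R : ℝ}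

theorem exists_block_far_from_head
    (hframe : ∀ v, Tendsto (fun n => ∑ i ∈ Finset.range n, f i v • x i) atTop (𝓝 v))
    (hshr : ∀ m, Tendsto (tailSupX x (f m)) atTop (𝓝 0))
    (hblocks : ∀ N, ∃ p q, N ≤ p ∧ p < q ∧ ε ≤ ‖∑ i ∈ Finset.Ico p q, b i • x i‖)
    (hR : ∀ p q, ‖∑ i ∈ Finset.Ico p q, b i • x i‖ ≤ R) (n : ℕ) {δ : ℝ} (hδ : 0 < δ) :
    ∃ p q N, n ≤ p ∧ p < q ∧ q ≤ N ∧
      ε ≤ ‖∑ i ∈ Finset.Ico p q, b i • x i‖ ∧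
      ∑ i ∈ Finset.range n, ‖f i (∑ i ∈ Finset.Ico p q, b i • x i) • x i‖ ≤ δ ∧
      ∀ m ≥ N, ‖∑ i ∈ Finset.range m, f i (∑ i ∈ Finset.Ico p q, b i • x i) • x i
        - ∑ i ∈ Finset.Ico p q, b i • x i‖ ≤ δ := by
  obtain ⟨p₀, hp₀⟩ := eventually_atTop.mp (eventually_sum_norm_smul_le hshr n R hδ)
  obtain ⟨p, q, hp, hpq, hεpq⟩ := hblocks (max n p₀)
  set w := ∑ i ∈ Finset.Ico p q, b i • x i
  have hw : w ∈ Submodule.span ℝ (x '' {i | p ≤ i}) :=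
    Submodule.sum_mem _ fun i hi => Submodule.smul_mem _ _
      (Submodule.subset_span ⟨i, (Finset.mem_Ico.mp hi).1, rfl⟩)
  obtain ⟨N₀, hN₀⟩ := eventually_atTop.mp
    ((tendsto_iff_norm_sub_tendsto_zero.mp (hframe w)).eventually_le_const hδ)
  exact ⟨p, q, max q N₀, le_of_max_le_left hp, hpq, le_max_left _ _, hεpq,
    hp₀ p (le_of_max_le_right hp) w hw (hR p q), fun m hm => hN₀ m (le_of_max_le_right hm)⟩

theorem exists_gliding_hump
    (hframe : ∀ v, Tendsto (fun n => ∑ i ∈ Finset.range n, f i v • x i) atTop (𝓝 v))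
    (hshr : ∀ m, Tendsto (tailSupX x (f m)) atTop (𝓝 0))
    (hblocks : ∀ N, ∃ p q, N ≤ p ∧ p < q ∧ ε ≤ ‖∑ i ∈ Finset.Ico p q, b i • x i‖)
    (hR : ∀ p q, ‖∑ i ∈ Finset.Ico p q, b i • x i‖ ≤ R) {δ : ℕ → ℝ} (hδ : ∀ k, 0 < δ k) :
    ∃ cut p q : ℕ → ℕ, ∀ k, cut k ≤ p k ∧ p k < q k ∧ q k ≤ cut (k + 1) ∧
      ε ≤ ‖∑ i ∈ Finset.Ico (p k) (q k), b i • x i‖ ∧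
      ∑ i ∈ Finset.range (cut k),
        ‖f i (∑ i ∈ Finset.Ico (p k) (q k), b i • x i) • x i‖ ≤ δ k ∧
      ∀ m ≥ cut (k + 1),
        ‖∑ i ∈ Finset.range m, f i (∑ i ∈ Finset.Ico (p k) (q k), b i • x i) • x i
          - ∑ i ∈ Finset.Ico (p k) (q k), b i • x i‖ ≤ δ k := by
  choose p q N hblock using fun k n =>
    exists_block_far_from_head hframe hshr hblocks hR n (hδ k)
  let cut : ℕ → ℕ := fun k => Nat.rec 0 (fun k c => N k c) k
  exact ⟨cut, fun k => p k (cut k), fun k => q k (cut k), fun k => hblock k (cut k)⟩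

theorem exists_almost_biorthogonal_of_cuts {K : ℝ}
    (hK : ∀ B : Finset ℕ, ‖∑ i ∈ B, (f i).smulRight (x i)‖ ≤ K)
    {v : ℕ → X} {cut : ℕ → ℕ} (hcut : Monotone cut) {δ : ℕ → ℝ}
    (hhead : ∀ k, ∑ i ∈ Finset.range (cut k), ‖f i (v k) • x i‖ ≤ δ k)
    (htail : ∀ k, ∀ m ≥ cut (k + 1), ‖∑ i ∈ Finset.range m, f i (v k) • x i - v k‖ ≤ δ k) :
    ∃ ψ : ℕ → X →L[ℝ] ℝ, (∀ k, ‖ψ k‖ ≤ K) ∧ (∀ k, ‖v k‖ - 2 * δ k ≤ ψ k (v k)) ∧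
      ∀ j k, j ≠ k → |ψ k (v j)| ≤ 2 * δ j := by
  choose φ hφ₁ hφ₂ using fun k => exists_dual_vector'' ℝ (v k)
  simp only [RCLike.ofReal_real_eq_id, id] at hφ₂
  let Q : ℕ → X →L[ℝ] X := fun k =>
    ∑ i ∈ Finset.Ico (cut k) (cut (k + 1)), (f i).smulRight (x i)
  have hQ : ∀ k u, Q k u = ∑ i ∈ Finset.Ico (cut k) (cut (k + 1)), f i u • x i := by
    intro k u; simp [Q]
  have hQ_sub : ∀ k u, Q k u = ∑ i ∈ Finset.range (cut (k + 1)), f i u • x i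
      - ∑ i ∈ Finset.range (cut k), f i u • x i := fun k u => by
    rw [hQ, Finset.sum_Ico_eq_sub _ (hcut k.le_succ)]
  have hφ : ∀ k u, |φ k u| ≤ ‖u‖ := fun k u => by
    simpa using (φ k).le_of_opNorm_le (hφ₁ k) u
  have hS : ∀ j m, m ≤ cut j → ‖∑ i ∈ Finset.range m, f i (v j) • x i‖ ≤ δ j := fun j m hm =>
    (norm_sum_le _ _).trans <| le_trans (Finset.sum_le_sum_of_subset_of_nonneg
      (Finset.range_subset_range.mpr hm) fun _ _ _ => norm_nonneg _) (hhead j)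
  refine ⟨fun k => (φ k).comp (Q k), fun k => ?_, fun k => ?_, fun j k hjk => ?_⟩
  · exact ((φ k).opNorm_comp_le _).trans
      ((mul_le_of_le_one_left (norm_nonneg _) (hφ₁ k)).trans (hK _))
  · have hdiff : ‖v k - Q k (v k)‖ ≤ 2 * δ k := by
      rw [hQ_sub, two_mul]
      calc _ = ‖∑ i ∈ Finset.range (cut k), f i (v k) • x i
              - (∑ i ∈ Finset.range (cut (k + 1)), f i (v k) • x i - v k)‖ := by congr 1; abel
        _ ≤ _ := (norm_sub_le _ _).trans (add_le_add (hS k _ le_rfl) (htail k _ le_rfl))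
    have h := hφ k (v k - Q k (v k))
    rw [map_sub, hφ₂] at h
    simp only [ContinuousLinearMap.comp_apply]
    linarith [(abs_le.mp h).2]
  · refine (hφ k (Q k (v j))).trans ?_
    rcases hjk.lt_or_gt with hjk | hkj
    · have hlate : ∀ m ≥ cut k, ‖∑ i ∈ Finset.range m, f i (v j) • x i - v j‖ ≤ δ j :=
        fun m hm => htail j m ((hcut hjk).trans hm)
      rw [hQ_sub, two_mul]
      calc _ = ‖(∑ i ∈ Finset.range (cut (k + 1)), f i (v j) • x i - v j)
              - (∑ i ∈ Finset.range (cut k), f i (v j) • x i - v j)‖ := by congr 1; abel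
        _ ≤ _ := (norm_sub_le _ _).trans
            (add_le_add (hlate _ (hcut k.le_succ)) (hlate _ le_rfl))
    · calc ‖Q k (v j)‖ ≤ ∑ i ∈ Finset.range (cut j), ‖f i (v j) • x i‖ := by
            rw [hQ]
            refine (norm_sum_le _ _).trans (Finset.sum_le_sum_of_subset_of_nonneg ?_
              fun _ _ _ => norm_nonneg _)
            exact fun i hi => Finset.mem_range.mpr
              ((Finset.mem_Ico.mp hi).2.trans_le (hcut (Nat.succ_le_of_lt hkj)))
        _ ≤ 2 * δ j := by linarith [hhead j, (norm_nonneg _).trans (hS j 0 (Nat.zero_le _))]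

theorem exists_almost_biorthogonal_blocks
    (hframe : ∀ v, Tendsto (fun n => ∑ i ∈ Finset.range n, f i v • x i) atTop (𝓝 v))
    (hshr : ∀ m, Tendsto (tailSupX x (f m)) atTop (𝓝 0))
    (hblocks : ∀ N, ∃ p q, N ≤ p ∧ p < q ∧ ε ≤ ‖∑ i ∈ Finset.Ico p q, b i • x i‖) {M : ℝ}
    (hb : MultiplierSumsLE (fun i => b i • x i) M) {K : ℝ}
    (hK : ∀ B : Finset ℕ, ‖∑ i ∈ B, (f i).smulRight (x i)‖ ≤ K)
    {δ : ℕ → ℝ} (hδ : ∀ k, 0 < δ k) :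
    ∃ (v : ℕ → X) (ψ : ℕ → X →L[ℝ] ℝ), MultiplierSumsLE v M ∧ (∀ k, ‖ψ k‖ ≤ K) ∧
      (∀ k, ε - 2 * δ k ≤ ψ k (v k)) ∧ ∀ j k, j ≠ k → |ψ k (v j)| ≤ 2 * δ j := by
  obtain ⟨cut, p, q, hblock⟩ :=
    exists_gliding_hump hframe hshr hblocks (fun p q => hb.norm_sum_le _) hδ
  simp only [forall_and] at hblock
  obtain ⟨hcut_p, hpq, hq_cut, hε, hhead, htail⟩ := hblock
  have hcut : Monotone cut := monotone_nat_of_le_succ fun k =>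
    (hcut_p k).trans ((hpq k).le.trans (hq_cut k))
  have hlt : ∀ j k, j < k → Disjoint (Finset.Ico (p j) (q j)) (Finset.Ico (p k) (q k)) :=
    fun j k hjk => Finset.disjoint_left.mpr fun i hij hik => by
      have := (hq_cut j).trans ((hcut hjk).trans (hcut_p k))
      simp only [Finset.mem_Ico] at hij hik
      omega
  obtain ⟨ψ, hψ, hdiag, hoff⟩ := exists_almost_biorthogonal_of_cuts hK
    (v := fun k => ∑ i ∈ Finset.Ico (p k) (q k), b i • x i) hcut hhead htail
  refine ⟨_, ψ, hb.blocks fun j k hjk => ?_, hψ, fun k => (hdiag k).trans' ?_, hoff⟩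
  · exact hjk.lt_or_gt.elim (hlt j k) fun h => (hlt k j h).symm
  · linarith [hε k]

end GlidingHump

theorem unconditionalSchauderFrame_not_preBoundedlyComplete_c0_general
    {X : Type*} [NormedAddCommGroup X] [NormedSpace ℝ X] [CompleteSpace X]
    (x : ℕ → X) (f : ℕ → X →L[ℝ] ℝ)
    (hframe : ∀ v : X,
      Tendsto (fun n => ∑ i ∈ Finset.range n, f i v • x i) atTop (𝓝 v))
    (huncond : ∀ v : X, HasSum (fun i => f i v • x i) v)
    (hshr : ∀ m : ℕ, Tendsto (tailSupX x (f m)) atTop (𝓝 0))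
    (hnotBdd : ¬ ∀ F : (X →L[ℝ] ℝ) →L[ℝ] ℝ, ∃ v : X,
      Tendsto (fun n => ∑ i ∈ Finset.range n, F (f i) • x i) atTop (𝓝 v)) :
    ∃ (T : C₀(ℕ, ℝ) →L[ℝ] X) (a b : ℝ), 0 < a ∧ a ≤ b ∧
      ∀ z : C₀(ℕ, ℝ), a * ‖z‖ ≤ ‖T z‖ ∧ ‖T z‖ ≤ b * ‖z‖ := by
  obtain ⟨F, hF⟩ := not_forall.mp hnotBdd
  have hnotCauchy : ¬ CauchySeq fun n => ∑ i ∈ Finset.range n, F (f i) • x i :=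
    fun h => hF (cauchySeq_tendsto_of_complete h)
  obtain ⟨ε, hε, hblocks⟩ := exists_le_norm_sum_Ico_of_not_cauchySeq hnotCauchy
  obtain ⟨K, hK⟩ := exists_forall_norm_sum_smulRight_le fun v => (huncond v).summable
  have hb : MultiplierSumsLE (fun i => F (f i) • x i) (2 * (‖F‖ * K)) :=
    .of_forall_norm_sum_le fun B =>
      (norm_sum_bidual_smul_le x f F B).trans (by gcongr; exact hK B)
  -- `δ k = ε/8 · 2⁻ᵏ`: diagonal entries `≥ 3ε/4`, off-diagonal row sums `≤ ε/2`
  obtain ⟨v, ψ, hv, hψ, hdiag, hoff⟩ := exists_almost_biorthogonal_blocks hframe hshr hblocks hb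
    hK (δ := fun k => ε / 8 * (1 / 2) ^ k) fun k => by positivity
  refine exists_c0_embedding hv hψ (α := 3 / 4 * ε) (β := ε / 2)
    (η := fun j => ε / 4 * (1 / 2) ^ j) (by linarith) (fun k => ?_)
    (fun j k hjk => (hoff j k hjk).trans_eq (by ring)) (fun n => ?_)
  · have := pow_le_one₀ (by norm_num) (by norm_num) (n := k) (a := (1 / 2 : ℝ))
    nlinarith [hdiag k]
  · rw [← Finset.mul_sum]
    nlinarith [sum_geometric_two_le n]

/-- Let `(x i, f i)` be an unconditional and locally shrinking Schauder
frame of a Banach space `X`. If the frame is not pre-boundedly complete, then `X` contains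
an isomorphic copy of `c₀` (here realized as `C₀(ℕ, ℝ)`): there is a continuous linear map
`T : c₀ → X` and constants `0 < a ≤ b` with `a ‖z‖ ≤ ‖T z‖ ≤ b ‖z‖` for all `z`. -/
theorem unconditionalSchauderFrame_not_preBoundedlyComplete_c0
    {X : Type*} [NormedAddCommGroup X] [NormedSpace ℝ X] [CompleteSpace X]
    (x : ℕ → X) (f : ℕ → X →L[ℝ] ℝ)
    (hx : ∀ i, x i ≠ 0) (hf : ∀ i, f i ≠ 0)
    (hframe : ∀ v : X,
      Tendsto (fun n => ∑ i ∈ Finset.range n, f i v • x i) atTop (𝓝 v))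
    (huncond : ∀ v : X, HasSum (fun i => f i v • x i) v)
    (hshr : ∀ m : ℕ, Tendsto (tailSupX x (f m)) atTop (𝓝 0))
    (hnotBdd : ¬ ∀ F : (X →L[ℝ] ℝ) →L[ℝ] ℝ, ∃ v : X,
      Tendsto (fun n => ∑ i ∈ Finset.range n, F (f i) • x i) atTop (𝓝 v)) :
    ∃ (T : C₀(ℕ, ℝ) →L[ℝ] X) (a b : ℝ), 0 < a ∧ a ≤ b ∧
      ∀ z : C₀(ℕ, ℝ), a * ‖z‖ ≤ ‖T z‖ ∧ ‖T z‖ ≤ b * ‖z‖ :=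
  unconditionalSchauderFrame_not_preBoundedlyComplete_c0_general x f hframe huncond hshr hnotBdd
end

section
/- Let (x_i, f_i) be an unconditional and locally shrinking Schauder frame of a Banach space X. If the frame is not pre-shrinking, then X contains a subspace isomorphic to ℓ_1; that is, there exists a continuous linear map T : ℓ_1 → X and constants 0 < a ≤ b such that a‖z‖ ≤ ‖T z‖ ≤ b‖z‖ for all z ∈ ℓ_1. -/
/-!
By Banach–Steinhaus, unconditionality bounds all finite partial-sum operators
`v ↦ ∑ i ∈ s, f i v • x i` by one constant `K`, hence also every coordinate projection `P_R`
onto a set `R` of indices. A functional `g` with `‖g ∘ P_{[0,n)} - g‖ ≥ ε` for infinitely many `n`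
produces, in every tail `span (x i : i ≥ M)`, vectors of norm `≤ K` on which `g ≥ ε / 2`.
Local shrinking makes their first coordinates small and convergence of their expansions makes
their far coordinates small, so one extracts blocks `u k` whose expansions live, up to `δ`, on
consecutive disjoint intervals. Given `z ∈ ℓ₁`, the functional `g ∘ (2 P_R - 1)`, where `R` is the
union of the intervals with `z k ≥ 0`, has the sign of `z k` and size `≳ ε` on each `u k`;
evaluating it at `∑ z k • u k` gives `‖∑ z k • u k‖ ≳ ‖z‖`.
-/

open Filter Topology

theorem Summable.exists_norm_sum_le {ι E : Type*} [NormedAddCommGroup E] {y : ι → E}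
    (hy : Summable y) : ∃ C, ∀ s : Finset ι, ‖∑ i ∈ s, y i‖ ≤ C := by
  classical
  obtain ⟨s₀, hs₀⟩ := cauchySeq_finset_iff_vanishing_norm.1 hy.hasSum.cauchySeq 1 one_pos
  refine ⟨∑ i ∈ s₀, ‖y i‖ + 1, fun s => ?_⟩
  rw [← Finset.sum_inter_add_sum_sdiff s s₀ y]
  calc ‖∑ i ∈ s ∩ s₀, y i + ∑ i ∈ s \ s₀, y i‖
      ≤ ∑ i ∈ s ∩ s₀, ‖y i‖ + ‖∑ i ∈ s \ s₀, y i‖ := norm_add_le_of_le (norm_sum_le _ _) le_rfl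
    _ ≤ ∑ i ∈ s₀, ‖y i‖ + 1 := by
      gcongr
      · exact Finset.inter_subset_right
      · exact (hs₀ _ Finset.sdiff_disjoint).le

theorem Summable.exists_norm_sum_tail_le {E : Type*} [NormedAddCommGroup E] {y : ℕ → E}
    (hy : Summable y) {δ : ℝ} (hδ : 0 < δ) :
    ∃ N, ∀ t : Finset ℕ, (∀ i ∈ t, N ≤ i) → ‖∑ i ∈ t, y i‖ ≤ δ := by
  obtain ⟨s, hs⟩ := cauchySeq_finset_iff_vanishing_norm.1 hy.hasSum.cauchySeq δ hδ
  obtain ⟨N, hN⟩ := s.exists_nat_subset_range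
  refine ⟨N, fun t ht => (hs t ?_).le⟩
  exact Finset.disjoint_left.2 fun i hit his => (Finset.mem_range.1 (hN his)).not_ge (ht i hit)

theorem exists_monotone_of_forall_exists {α : Type*} {p : α → ℕ → ℕ → Prop}
    (h : ∀ M, ∃ a N, M ≤ N ∧ p a M N) :
    ∃ (M : ℕ → ℕ) (a : ℕ → α), Monotone M ∧ ∀ k, p (a k) (M k) (M (k + 1)) := by
  choose a N hMN hp using h
  let M : ℕ → ℕ := fun k => Nat.rec 0 (fun _ m => N m) k
  exact ⟨M, fun k => a (M k), monotone_nat_of_le_succ fun k => hMN (M k), fun k => hp (M k)⟩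

section LpOne

variable {ι X : Type*} [NormedAddCommGroup X] [NormedSpace ℝ X]

theorem lp.hasSum_norm_one {E : Type*} [NormedAddCommGroup E] (z : lp (fun _ : ι => E) 1) :
    HasSum (fun i => ‖z i‖) ‖z‖ := by
  simpa using lp.hasSum_norm (p := 1) (by norm_num) z

theorem norm_tsum_lp_one_smul_le {u : ι → X} {K : ℝ} (hu : ∀ i, ‖u i‖ ≤ K)
    (z : lp (fun _ : ι => ℝ) 1) : ‖∑' i, z i • u i‖ ≤ K * ‖z‖ := by
  rw [mul_comm]
  exact tsum_of_norm_bounded ((lp.hasSum_norm_one z).mul_right K) fun i => by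
    rw [norm_smul]
    exact mul_le_mul_of_nonneg_left (hu i) (norm_nonneg _)

variable [CompleteSpace X]

theorem summable_lp_one_smul {u : ι → X} {K : ℝ} (hu : ∀ i, ‖u i‖ ≤ K)
    (z : lp (fun _ : ι => ℝ) 1) : Summable fun i => z i • u i :=
  .of_norm_bounded ((lp.hasSum_norm_one z).summable.mul_right K) fun i => by
    rw [norm_smul]
    exact mul_le_mul_of_nonneg_left (hu i) (norm_nonneg _)

noncomputable def l1Synthesis (u : ι → X) {K : ℝ} (hu : ∀ i, ‖u i‖ ≤ K) :
    lp (fun _ : ι => ℝ) 1 →L[ℝ] X :=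
  LinearMap.mkContinuous
    { toFun := fun z => ∑' i, z i • u i
      map_add' := fun z w => by
        simp only [lp.coeFn_add, Pi.add_apply, add_smul]
        exact (summable_lp_one_smul hu z).tsum_add (summable_lp_one_smul hu w)
      map_smul' := fun c z => by
        simp only [lp.coeFn_smul, Pi.smul_apply, smul_eq_mul, mul_smul, RingHom.id_apply]
        exact (summable_lp_one_smul hu z).tsum_const_smul c }
    K (norm_tsum_lp_one_smul_le hu)

theorem l1Synthesis_apply {u : ι → X} {K : ℝ} (hu : ∀ i, ‖u i‖ ≤ K) (z : lp (fun _ : ι => ℝ) 1) :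
    l1Synthesis u hu z = ∑' i, z i • u i :=
  rfl

theorem norm_l1Synthesis_apply_le {u : ι → X} {K : ℝ} (hu : ∀ i, ‖u i‖ ≤ K)
    (z : lp (fun _ : ι => ℝ) 1) : ‖l1Synthesis u hu z‖ ≤ K * ‖z‖ :=
  norm_tsum_lp_one_smul_le hu z

theorem le_norm_l1Synthesis_apply {u : ι → X} {K : ℝ} (hu : ∀ i, ‖u i‖ ≤ K)
    (z : lp (fun _ : ι => ℝ) 1) (ψ : X →L[ℝ] ℝ) {c : ℝ}
    (hψ : ∀ i, (0 ≤ z i → c ≤ ψ (u i)) ∧ (z i < 0 → ψ (u i) ≤ -c)) :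
    c * ‖z‖ ≤ ‖ψ‖ * ‖l1Synthesis u hu z‖ := by
  have hsum : HasSum (fun i => z i * ψ (u i)) (ψ (l1Synthesis u hu z)) := by
    simpa [l1Synthesis_apply] using (summable_lp_one_smul hu z).hasSum.mapL ψ
  have hle : ∀ i, c * ‖z i‖ ≤ z i * ψ (u i) := fun i => by
    rcases le_or_gt 0 (z i) with hz | hz
    · rw [Real.norm_of_nonneg hz, mul_comm]
      exact mul_le_mul_of_nonneg_left ((hψ i).1 hz) hz
    · rw [Real.norm_of_nonpos hz.le]
      nlinarith [(hψ i).2 hz]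
  calc c * ‖z‖ ≤ ψ (l1Synthesis u hu z) := hasSum_le hle ((lp.hasSum_norm_one z).mul_left c) hsum
    _ ≤ ‖ψ‖ * ‖l1Synthesis u hu z‖ := (le_abs_self _).trans (ψ.le_opNorm _)

end LpOne

namespace SchauderFrame

variable {X : Type*} [NormedAddCommGroup X] [NormedSpace ℝ X] {x : ℕ → X} {f : ℕ → X →L[ℝ] ℝ}

variable (x f) in
noncomputable def partialSumOp (s : Finset ℕ) : X →L[ℝ] X :=
  ∑ i ∈ s, (f i).smulRight (x i)

@[simp]
theorem partialSumOp_apply (s : Finset ℕ) (v : X) :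
    partialSumOp x f s v = ∑ i ∈ s, f i v • x i := by
  simp [partialSumOp]

theorem sum_range_smul_eq_comp_partialSumOp (g : X →L[ℝ] ℝ) (n : ℕ) :
    ∑ i ∈ Finset.range n, g (x i) • f i = g ∘L partialSumOp x f (Finset.range n) := by
  ext v
  simp [mul_comm]

theorem partialSumOp_apply_mem_span {s : Finset ℕ} {M : ℕ} (hs : ∀ i ∈ s, M ≤ i) (v : X) :
    partialSumOp x f s v ∈ Submodule.span ℝ (x '' {i | M ≤ i}) := by
  rw [partialSumOp_apply]
  exact Submodule.sum_mem _ fun i hi =>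
    Submodule.smul_mem _ _ (Submodule.subset_span ⟨i, hs i hi, rfl⟩)

theorem abs_apply_le_tailSupX_mul_norm (g : X →L[ℝ] ℝ) {n : ℕ} {z : X}
    (hz : z ∈ Submodule.span ℝ (x '' {i | n ≤ i})) : |g z| ≤ tailSupX x g n * ‖z‖ := by
  rcases eq_or_ne z 0 with rfl | hz0
  · simp
  have hpos : 0 < ‖z‖ := norm_pos_iff.2 hz0
  have hbdd : BddAbove ((fun z : X => |g z|) ''
      {z | z ∈ Submodule.span ℝ (x '' {i | n ≤ i}) ∧ ‖z‖ ≤ 1}) := by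
    refine ⟨‖g‖, ?_⟩
    rintro _ ⟨w, ⟨-, hw⟩, rfl⟩
    simpa using g.le_of_opNorm_le_of_le le_rfl hw
  have hunit : |g (‖z‖⁻¹ • z)| ≤ tailSupX x g n :=
    le_csSup hbdd ⟨_, ⟨Submodule.smul_mem _ _ hz, by simp [norm_smul, hpos.ne']⟩, rfl⟩
  rwa [map_smul, smul_eq_mul, abs_mul, abs_inv, abs_norm, inv_mul_le_iff₀ hpos, mul_comm] at hunit

theorem eventually_sum_abs_apply_mul_norm_le
    (hshr : ∀ m, Tendsto (tailSupX x (f m)) atTop (𝓝 0)) (M : ℕ) {δ : ℝ} (hδ : 0 < δ) :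
    ∀ᶠ n in atTop, ∀ z ∈ Submodule.span ℝ (x '' {i | n ≤ i}),
      ∑ i ∈ Finset.range M, |f i z| * ‖x i‖ ≤ δ * ‖z‖ := by
  have hlim : Tendsto (fun n => ∑ i ∈ Finset.range M, tailSupX x (f i) n * ‖x i‖) atTop (𝓝 0) := by
    simpa using tendsto_finsetSum _ fun i _ => (hshr i).mul_const ‖x i‖
  filter_upwards [hlim.eventually (ge_mem_nhds hδ)] with n hn z hz
  calc ∑ i ∈ Finset.range M, |f i z| * ‖x i‖
      ≤ ∑ i ∈ Finset.range M, tailSupX x (f i) n * ‖x i‖ * ‖z‖ := by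
        refine Finset.sum_le_sum fun i _ => ?_
        rw [mul_right_comm]
        exact mul_le_mul_of_nonneg_right (abs_apply_le_tailSupX_mul_norm _ hz) (norm_nonneg _)
    _ ≤ δ * ‖z‖ := by
        rw [← Finset.sum_mul]
        gcongr

theorem partialSumOp_Ico_eq_sub {n N : ℕ} (h : n ≤ N) :
    partialSumOp x f (Finset.Ico n N) =
      partialSumOp x f (Finset.range N) - partialSumOp x f (Finset.range n) :=
  Finset.sum_Ico_eq_sub _ h

theorem exists_lt_abs_apply_partialSumOp_Ico
    (hexp : ∀ v, Tendsto (fun n => ∑ i ∈ Finset.range n, f i v • x i) atTop (𝓝 v))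
    (g : X →L[ℝ] ℝ) (n : ℕ) {r : ℝ} (hr : r < ‖g ∘L partialSumOp x f (Finset.range n) - g‖) :
    ∃ v : X, ‖v‖ < 1 ∧ ∃ N, r < |g (partialSumOp x f (Finset.Ico n N) v)| := by
  obtain ⟨v, hv, hrv⟩ :=
    (g ∘L partialSumOp x f (Finset.range n) - g).exists_lt_apply_of_lt_opNorm hr
  have hlim : Tendsto (fun N => |g (partialSumOp x f (Finset.range N) v) -
      g (partialSumOp x f (Finset.range n) v)|) atTop
      (𝓝 ‖(g ∘L partialSumOp x f (Finset.range n) - g) v‖) := by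
    have := ((g.continuous.tendsto v).comp (by simpa using hexp v)).sub_const
      (g (partialSumOp x f (Finset.range n) v))
    simpa [Real.norm_eq_abs, abs_sub_comm] using this.abs
  obtain ⟨N, hrN, hnN⟩ := ((hlim.eventually (lt_mem_nhds hrv)).and (eventually_ge_atTop n)).exists
  refine ⟨v, hv, N, ?_⟩
  simpa [partialSumOp_Ico_eq_sub hnN] using hrN

theorem exists_mem_span_le_apply_of_not_tendsto
    (hexp : ∀ v, Tendsto (fun n => ∑ i ∈ Finset.range n, f i v • x i) atTop (𝓝 v))
    {K : ℝ} (hK : ∀ s, ‖partialSumOp x f s‖ ≤ K) {g : X →L[ℝ] ℝ}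
    (hg : ¬ Tendsto (fun n => ∑ i ∈ Finset.range n, g (x i) • f i) atTop (𝓝 g)) :
    ∃ ε > 0, ∀ M, ∃ u ∈ Submodule.span ℝ (x '' {i | M ≤ i}), ‖u‖ ≤ K ∧ ε ≤ g u := by
  simp_rw [sum_range_smul_eq_comp_partialSumOp, Metric.tendsto_atTop, dist_eq_norm] at hg
  push Not at hg
  obtain ⟨ε, hε, hfreq⟩ := hg
  refine ⟨ε / 2, half_pos hε, fun M => ?_⟩
  obtain ⟨n, hMn, hn⟩ := hfreq M
  obtain ⟨v, hv, N, hvN⟩ :=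
    exists_lt_abs_apply_partialSumOp_Ico hexp g n (r := ε / 2) (by linarith)
  set w := partialSumOp x f (Finset.Ico n N) v
  have hw : w ∈ Submodule.span ℝ (x '' {i | M ≤ i}) := partialSumOp_apply_mem_span
    (fun i hi => hMn.trans (Finset.mem_Ico.1 hi).1) v
  have hwK : ‖w‖ ≤ K :=
    (partialSumOp x f _).le_of_opNorm_le_of_le (hK _) hv.le |>.trans_eq (mul_one K)
  rcases lt_abs.1 hvN with hpos | hneg
  · exact ⟨w, hw, hwK, hpos.le⟩
  · exact ⟨-w, Submodule.neg_mem _ hw, by rwa [norm_neg], by rw [map_neg]; exact hneg.le⟩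

variable (x f) in
def IsConcentratedOn (v : X) (I : Set ℕ) (δ : ℝ) : Prop :=
  ∀ t : Finset ℕ, (∀ i ∈ t, i ∉ I) → ‖∑ i ∈ t, f i v • x i‖ ≤ δ

theorem isConcentratedOn_Ico {v : X} {M N : ℕ} {δ₁ δ₂ : ℝ}
    (hhead : ∑ i ∈ Finset.range M, |f i v| * ‖x i‖ ≤ δ₁)
    (htail : ∀ t : Finset ℕ, (∀ i ∈ t, N ≤ i) → ‖∑ i ∈ t, f i v • x i‖ ≤ δ₂) :
    IsConcentratedOn x f v (Set.Ico M N) (δ₁ + δ₂) := by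
  intro t ht
  rw [← Finset.sum_filter_add_sum_filter_not t (· < M)]
  refine norm_add_le_of_le ?_ (htail _ fun i hi => ?_)
  · calc ‖∑ i ∈ t with i < M, f i v • x i‖
        ≤ ∑ i ∈ t with i < M, |f i v| * ‖x i‖ := by
          simpa only [norm_smul, Real.norm_eq_abs] using
            norm_sum_le {i ∈ t | i < M} fun i => f i v • x i
      _ ≤ ∑ i ∈ Finset.range M, |f i v| * ‖x i‖ :=
          Finset.sum_le_sum_of_subset_of_nonneg
            (fun i hi => Finset.mem_range.2 (Finset.mem_filter.1 hi).2)
            fun i _ _ => by positivity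
      _ ≤ δ₁ := hhead
  · obtain ⟨hit, hiM⟩ := Finset.mem_filter.1 hi
    by_contra hiN
    exact ht i hit ⟨not_lt.1 hiM, not_le.1 hiN⟩

theorem IsConcentratedOn.norm_le_of_hasSum_indicator {v : X} {I R : Set ℕ} {δ : ℝ}
    (h : IsConcentratedOn x f v I δ) (hR : Disjoint R I) {p : X}
    (hp : HasSum (R.indicator fun i => f i v • x i) p) : ‖p‖ ≤ δ := by
  classical
  refine le_of_tendsto' (Filter.Tendsto.norm hp) fun s => ?_
  simp only [Set.indicator_apply, ← Finset.sum_filter]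
  exact h _ fun i hi => Set.disjoint_left.1 hR (Finset.mem_filter.1 hi).2

theorem IsConcentratedOn.norm_sub_le_of_hasSum_indicator {v : X} {I R : Set ℕ} {δ : ℝ}
    (h : IsConcentratedOn x f v I δ) (hv : HasSum (fun i => f i v • x i) v) (hR : I ⊆ R) {p : X}
    (hp : HasSum (R.indicator fun i => f i v • x i) p) : ‖v - p‖ ≤ δ := by
  refine h.norm_le_of_hasSum_indicator (Set.disjoint_compl_left_iff_subset.2 hR) ?_
  rw [Set.indicator_compl]
  exact hv.sub hp

theorem exists_isConcentratedOn_Ico (hexp : ∀ v, HasSum (fun i => f i v • x i) v)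
    (hshr : ∀ m, Tendsto (tailSupX x (f m)) atTop (𝓝 0)) {K : ℝ} (hK : 0 < K) {P : X → Prop}
    (hP : ∀ M, ∃ u ∈ Submodule.span ℝ (x '' {i | M ≤ i}), ‖u‖ ≤ K ∧ P u)
    {δ : ℝ} (hδ : 0 < δ) (M : ℕ) :
    ∃ u N, M ≤ N ∧ ‖u‖ ≤ K ∧ P u ∧ IsConcentratedOn x f u (Set.Ico M N) δ := by
  obtain ⟨n, hn⟩ := (eventually_sum_abs_apply_mul_norm_le hshr M
    (show 0 < δ / 2 / K by positivity)).exists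
  obtain ⟨u, hu, huK, hPu⟩ := hP n
  obtain ⟨N, hN⟩ := (hexp u).summable.exists_norm_sum_tail_le (half_pos hδ)
  refine ⟨u, max M N, le_max_left _ _, huK, hPu, ?_⟩
  have hhead : ∑ i ∈ Finset.range M, |f i u| * ‖x i‖ ≤ δ / 2 :=
    (hn u hu).trans <| by
      rw [div_mul_eq_mul_div, div_le_iff₀ hK]
      gcongr
  simpa using isConcentratedOn_Ico hhead fun t ht =>
    hN t fun i hi => (le_max_right _ _).trans (ht i hi)

variable [CompleteSpace X]

theorem exists_norm_partialSumOp_le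
    (hexp : ∀ v, HasSum (fun i => f i v • x i) v) :
    ∃ K, 0 < K ∧ ∀ s, ‖partialSumOp x f s‖ ≤ K := by
  obtain ⟨C, hC⟩ := banach_steinhaus (g := partialSumOp x f) fun v => by
    simpa using (hexp v).summable.exists_norm_sum_le
  exact ⟨max C 1, by positivity, fun s => (hC s).trans (le_max_left _ _)⟩

theorem exists_hasSum_indicator
    (hexp : ∀ v, HasSum (fun i => f i v • x i) v) {K : ℝ} (hK : ∀ s, ‖partialSumOp x f s‖ ≤ K)
    (S : Set ℕ) :
    ∃ P : X →L[ℝ] X, ‖P‖ ≤ K ∧ ∀ v, HasSum (S.indicator fun i => f i v • x i) (P v) := by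
  classical
  have hsum : ∀ v, HasSum (S.indicator fun i => f i v • x i)
      (∑' i, S.indicator (fun i => f i v • x i) i) :=
    fun v => ((hexp v).summable.indicator S).hasSum
  have hfilter : ∀ (s : Finset ℕ) v,
      partialSumOp x f {i ∈ s | i ∈ S} v = ∑ i ∈ s, S.indicator (fun i => f i v • x i) i := by
    intro s v
    rw [partialSumOp_apply, Finset.sum_filter]
    rfl
  have htend : Tendsto (fun s v => partialSumOp x f {i ∈ s | i ∈ S} v) atTop
      (𝓝 fun v => ∑' i, S.indicator (fun i => f i v • x i) i) :=
    tendsto_pi_nhds.2 fun v => by simp only [hfilter]; exact hsum v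
  let P := continuousLinearMapOfTendsto _ htend
  refine ⟨P, ?_, hsum⟩
  refine P.opNorm_le_bound ((norm_nonneg _).trans (hK ∅)) fun v => ?_
  refine le_of_tendsto ((continuous_apply v).tendsto _ |>.comp htend).norm
    (Eventually.of_forall fun s => ?_)
  exact (partialSumOp x f _).le_of_opNorm_le (hK _) v

theorem exists_functional_of_blocks (hexp : ∀ v, HasSum (fun i => f i v • x i) v) {K : ℝ}
    (hK : ∀ s, ‖partialSumOp x f s‖ ≤ K) (g : X →L[ℝ] ℝ) {M : ℕ → ℕ} (hM : Monotone M)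
    {u : ℕ → X} {δ : ℝ} (hu : ∀ k, IsConcentratedOn x f (u k) (Set.Ico (M k) (M (k + 1))) δ)
    (B : Set ℕ) :
    ∃ ψ : X →L[ℝ] ℝ, ‖ψ‖ ≤ ‖g‖ * (2 * K + 1) ∧ ∀ k,
      (k ∈ B → g (u k) - 2 * ‖g‖ * δ ≤ ψ (u k)) ∧ (k ∉ B → ψ (u k) ≤ 2 * ‖g‖ * δ - g (u k)) := by
  obtain ⟨P, hPK, hP⟩ := exists_hasSum_indicator hexp hK (⋃ k ∈ B, Set.Ico (M k) (M (k + 1)))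
  set ψ := g ∘L ((2 : ℝ) • P - ContinuousLinearMap.id ℝ X)
  have hψ : ∀ v, ψ v = 2 * g (P v) - g v := fun v => by simp [ψ]
  refine ⟨ψ, ?_, fun k => ⟨fun hk => ?_, fun hk => ?_⟩⟩
  · refine (g.opNorm_comp_le _).trans (mul_le_mul_of_nonneg_left ?_ (norm_nonneg g))
    refine (norm_sub_le _ _).trans (add_le_add ?_ ContinuousLinearMap.norm_id_le)
    rw [norm_smul, Real.norm_ofNat]
    gcongr
  · have h := (hu k).norm_sub_le_of_hasSum_indicator (hexp (u k))
      (Set.subset_biUnion_of_mem (u := fun k => Set.Ico (M k) (M (k + 1))) hk) (hP (u k))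
    have hg := abs_le.1 (g.le_of_opNorm_le_of_le le_rfl h)
    rw [map_sub] at hg
    linarith [hψ (u k)]
  · have hdisj : Disjoint (⋃ j ∈ B, Set.Ico (M j) (M (j + 1))) (Set.Ico (M k) (M (k + 1))) :=
      Set.disjoint_iUnion₂_left.2 fun j hj =>
        hM.pairwise_disjoint_on_Ico_succ (ne_of_mem_of_not_mem hj hk)
    have hg := abs_le.1 (g.le_of_opNorm_le_of_le le_rfl
      ((hu k).norm_le_of_hasSum_indicator hdisj (hP (u k))))
    linarith [hψ (u k)]

theorem le_norm_l1Synthesis_of_blocks (hexp : ∀ v, HasSum (fun i => f i v • x i) v) {K : ℝ}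
    (hK : ∀ s, ‖partialSumOp x f s‖ ≤ K) (g : X →L[ℝ] ℝ) {M : ℕ → ℕ} (hM : Monotone M)
    {u : ℕ → X} (huK : ∀ k, ‖u k‖ ≤ K) {ε δ : ℝ} (hgu : ∀ k, ε ≤ g (u k))
    (hu : ∀ k, IsConcentratedOn x f (u k) (Set.Ico (M k) (M (k + 1))) δ) (hδ : 4 * ‖g‖ * δ ≤ ε)
    (z : lp (fun _ : ℕ => ℝ) 1) :
    ε / 2 * ‖z‖ ≤ ‖g‖ * (2 * K + 1) * ‖l1Synthesis u huK z‖ := by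
  obtain ⟨ψ, hψK, hψ⟩ := exists_functional_of_blocks hexp hK g hM hu {k | 0 ≤ z k}
  refine (le_norm_l1Synthesis_apply huK z ψ fun k => ⟨fun hk => ?_, fun hk => ?_⟩).trans ?_
  · linarith [(hψ k).1 hk, hgu k]
  · linarith [(hψ k).2 (not_le.2 hk), hgu k]
  · gcongr

end SchauderFrame

open SchauderFrame

theorem unconditionalSchauderFrame_not_preShrinking_l1_general
    {X : Type*} [NormedAddCommGroup X] [NormedSpace ℝ X] [CompleteSpace X]
    (x : ℕ → X) (f : ℕ → X →L[ℝ] ℝ)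
    (huncond : ∀ v : X, HasSum (fun i => f i v • x i) v)
    (hshr : ∀ m : ℕ, Tendsto (tailSupX x (f m)) atTop (𝓝 0))
    (hnotShr : ¬ ∀ g : X →L[ℝ] ℝ,
      Tendsto (fun n => ∑ i ∈ Finset.range n, g (x i) • f i) atTop (𝓝 g)) :
    ∃ (T : lp (fun _ : ℕ => ℝ) 1 →L[ℝ] X) (a b : ℝ), 0 < a ∧ a ≤ b ∧
      ∀ z : lp (fun _ : ℕ => ℝ) 1, a * ‖z‖ ≤ ‖T z‖ ∧ ‖T z‖ ≤ b * ‖z‖ := by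
  obtain ⟨K, hK0, hK⟩ := exists_norm_partialSumOp_le huncond
  obtain ⟨g, hg⟩ := not_forall.1 hnotShr
  obtain ⟨ε, hε, hspan⟩ :=
    exists_mem_span_le_apply_of_not_tendsto (fun v => (huncond v).tendsto_sum_nat) hK hg
  set δ := ε / (4 * (‖g‖ + 1))
  obtain ⟨M, u, hM, hu⟩ := exists_monotone_of_forall_exists
    (exists_isConcentratedOn_Ico huncond hshr hK0 hspan (show 0 < δ by positivity))
  choose huK hgu hconc using hu
  have hg0 : 0 < ‖g‖ := norm_pos_iff.2 fun h => by simpa [h] using hε.trans_le (hgu 0)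
  have hδ : 4 * ‖g‖ * δ ≤ ε := by
    rw [mul_div_assoc', div_le_iff₀ (by positivity)]
    nlinarith
  set C := ‖g‖ * (2 * K + 1)
  refine ⟨l1Synthesis u huK, ε / 2 / C, max (ε / 2 / C) K, by positivity, le_max_left _ _,
    fun z => ⟨?_, ?_⟩⟩
  · rw [div_mul_eq_mul_div, div_le_iff₀ (by positivity), mul_comm _ C]
    exact le_norm_l1Synthesis_of_blocks huncond hK g hM huK hgu hconc hδ z
  · exact (norm_l1Synthesis_apply_le huK z).trans (by gcongr; exact le_max_right _ _)

/-- Let `(x i, f i)` be an unconditional and locally shrinking Schauder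
frame of a Banach space `X`. If the frame is not pre-shrinking, then `X` contains an
isomorphic copy of `ℓ₁` (realized as `lp (fun _ : ℕ => ℝ) 1`): there is a continuous
linear map `T : ℓ₁ → X` and constants `0 < a ≤ b` with `a ‖z‖ ≤ ‖T z‖ ≤ b ‖z‖`. -/
theorem unconditionalSchauderFrame_not_preShrinking_l1
    {X : Type*} [NormedAddCommGroup X] [NormedSpace ℝ X] [CompleteSpace X]
    (x : ℕ → X) (f : ℕ → X →L[ℝ] ℝ)
    (hx : ∀ i, x i ≠ 0) (hf : ∀ i, f i ≠ 0)
    (hframe : ∀ v : X,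
      Tendsto (fun n => ∑ i ∈ Finset.range n, f i v • x i) atTop (𝓝 v))
    (huncond : ∀ v : X, HasSum (fun i => f i v • x i) v)
    (hshr : ∀ m : ℕ, Tendsto (tailSupX x (f m)) atTop (𝓝 0))
    (hnotShr : ¬ ∀ g : X →L[ℝ] ℝ,
      Tendsto (fun n => ∑ i ∈ Finset.range n, g (x i) • f i) atTop (𝓝 g)) :
    ∃ (T : lp (fun _ : ℕ => ℝ) 1 →L[ℝ] X) (a b : ℝ), 0 < a ∧ a ≤ b ∧
      ∀ z : lp (fun _ : ℕ => ℝ) 1, a * ‖z‖ ≤ ‖T z‖ ∧ ‖T z‖ ≤ b * ‖z‖ :=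
  unconditionalSchauderFrame_not_preShrinking_l1_general x f huncond hshr hnotShr
end
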